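/- arXiv:math/0406019 — 2 statements merged into one kernel-verified Lean document; each statement's English description precedes it below -/
import Mathlib

section
/- If a finite poset P is both ε-graded and μ-graded for labelings ε, μ of its covering relations, then the order polynomials satisfy Ω(P,ε; t - r(ε)/2) = Ω(P,μ; t - r(μ)/2), i.e., Ω(P,μ;n) = Ω(P,ε; n + (r(μ)-r(ε))/2) for all integers n. -/
open Polynomial

variable {P : Type*}

/-- The ε-weight of a chain `x₀ ⋖ x₁ ⋖ ⋯ ⋖ xₙ`, recorded as a list:
the sum `Σ ε(x_{i-1}, x_i)` over consecutive pairs. -/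
def chainWeight (ε : P → P → ℤ) (c : List P) : ℤ :=
  ((c.zip c.tail).map fun q => ε q.1 q.2).sum

/-- A (nonempty) saturated chain of the poset `P`, as a list of elements with
each member covered by the next. -/
def IsSatChain [PartialOrder P] (c : List P) : Prop :=
  c ≠ [] ∧ c.Chain' (· ⋖ ·)

/-- A maximal chain: a saturated chain starting at a minimal element and
ending at a maximal element. -/
def IsMaxChainL [PartialOrder P] (c : List P) : Prop :=
  IsSatChain c ∧ (∀ x ∈ c.head?, IsMin x) ∧ (∀ x ∈ c.getLast?, IsMax x)

/-- A saturated chain starting at a minimal element of `P` and ending at `x`. -/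
def IsSatChainFromMinTo [PartialOrder P] (x : P) (c : List P) : Prop :=
  IsSatChain c ∧ (∀ y ∈ c.head?, IsMin y) ∧ c.getLast? = some x

/-- `ε` takes only the values `1` and `-1` on covering relations. -/
def IsSignLabeling [PartialOrder P] (ε : P → P → ℤ) : Prop :=
  ∀ x y : P, x ⋖ y → ε x y = 1 ∨ ε x y = -1

/-- `P` is `ε`-graded of rank `r`: every maximal chain has ε-weight `r`. -/
def IsEGraded [PartialOrder P] (ε : P → P → ℤ) (r : ℤ) : Prop :=
  ∀ c : List P, IsMaxChainL c → chainWeight ε c = r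

/-- A `(P,ε)`-partition: an order-reversing map `σ : P → {1,2,…}` which is
strict on covering relations labeled `-1`. -/
def IsPPartition [PartialOrder P] (ε : P → P → ℤ) (σ : P → ℤ) : Prop :=
  (∀ x, 1 ≤ σ x) ∧ (∀ x y : P, x ≤ y → σ y ≤ σ x) ∧
  (∀ x y : P, x ⋖ y → ε x y = -1 → σ y < σ x)

/-- `Ω(P,ε;n)`: the number of `(P,ε)`-partitions with largest part at most `n`. -/
noncomputable def OmegaCount [PartialOrder P] (ε : P → P → ℤ) (n : ℕ) : ℕ :=
  Nat.card {σ : P → ℤ // IsPPartition ε σ ∧ ∀ x, σ x ≤ (n : ℤ)}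


/-!
Let `ρ_ε`, `ρ_μ` be the rank functions. Both change by `±1` along each cover, so `ρ_ε - ρ_μ` is
even and `g = (ρ_ε - ρ_μ + r(μ) - r(ε)) / 2` is an integer-valued function, equal to `0` on
maximal and to `k = (r(μ) - r(ε)) / 2` on minimal elements, with `g y - g x = (ε(x,y) - μ(x,y)) / 2`
on every cover `x ⋖ y`. Hence `σ ↦ σ + g` sends `(P,μ)`-partitions to `(P,ε)`-partitions: `g`
drops by one exactly on the covers where `ε` demands a strict descent and `μ` does not, and rises
by one only where `μ` already forces `σ` to descend strictly. Its inverse is `τ ↦ τ - g`, and it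
shifts the bound on the largest part by `k`, so `Ω(P,μ;n) = Ω(P,ε;n+k)` for all large `n`.
-/

theorem chainWeight_cons_cons (ε : P → P → ℤ) (a b : P) (l : List P) :
    chainWeight ε (a :: b :: l) = ε a b + chainWeight ε (b :: l) := by
  simp [chainWeight]

theorem chainWeight_append (ε : P → P → ℤ) {c : List P} {a : P} (hc : c.getLast? = some a)
    (d : List P) : chainWeight ε (c ++ d) = chainWeight ε c + chainWeight ε (a :: d) := by
  induction c with
  | nil => simp at hc
  | cons b c ih =>
    cases c with
    | nil =>
      obtain rfl : b = a := by simpa using hc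
      simp [chainWeight]
    | cons b' c =>
      rw [List.getLast?_cons_cons] at hc
      rw [List.cons_append, List.cons_append, chainWeight_cons_cons, chainWeight_cons_cons,
        ← List.cons_append, ih hc]
      ring

section Chains

variable [PartialOrder P] {x y : P} {c d : List P}

theorem isSatChainFromMinTo_singleton (hx : IsMin x) : IsSatChainFromMinTo x [x] :=
  ⟨⟨List.cons_ne_nil x [], List.isChain_singleton x⟩, by simpa using hx, rfl⟩

theorem IsSatChainFromMinTo.append_covBy (hc : IsSatChainFromMinTo x c) (hxy : x ⋖ y) :
    IsSatChainFromMinTo y (c ++ [y]) := by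
  obtain ⟨⟨hne, hchain⟩, hmin, hlast⟩ := hc
  refine ⟨⟨by simp, hchain.append (List.isChain_singleton y) ?_⟩, ?_, by simp⟩
  · simpa [hlast] using hxy
  · rwa [List.head?_append_of_ne_nil _ hne]

theorem IsSatChainFromMinTo.isMaxChainL_append (hc : IsSatChainFromMinTo x c)
    (hd : (x :: d).IsChain (· ⋖ ·)) (hmax : IsMax ((x :: d).getLast (List.cons_ne_nil x d))) :
    IsMaxChainL (c ++ d) := by
  obtain ⟨⟨hne, hchain⟩, hmin, hlast⟩ := hc
  refine ⟨⟨by simp [hne], hchain.append hd.tail ?_⟩, ?_, ?_⟩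
  · simpa [hlast] using List.isChain_cons.1 hd |>.1
  · rwa [List.head?_append_of_ne_nil _ hne]
  · intro z hz
    cases d with
    | nil => simp_all
    | cons b d =>
      rw [List.getLast?_append, List.getLast?_eq_some_getLast (List.cons_ne_nil b d)] at hz
      simp only [Option.some_or, Option.mem_def, Option.some.injEq] at hz
      rwa [← hz, ← List.getLast_cons (List.cons_ne_nil b d)]

variable [Finite P]

theorem exists_isSatChainFromMinTo (x : P) : ∃ c, IsSatChainFromMinTo x c := by
  induction x using WellFoundedLT.induction with
  | _ x ih =>
    by_cases hx : IsMin x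
    · exact ⟨[x], isSatChainFromMinTo_singleton hx⟩
    · obtain ⟨y, hyx⟩ := not_isMin_iff.1 hx
      obtain ⟨z, -, hzx⟩ := hyx.exists_le_covby
      obtain ⟨c, hc⟩ := ih z hzx.lt
      exact ⟨c ++ [x], hc.append_covBy hzx⟩

theorem exists_isChain_covBy_cons_isMax (x : P) :
    ∃ d : List P, (x :: d).IsChain (· ⋖ ·) ∧ IsMax ((x :: d).getLast (List.cons_ne_nil x d)) := by
  induction x using WellFoundedGT.induction with
  | _ x ih =>
    by_cases hx : IsMax x
    · exact ⟨[], List.isChain_singleton x, hx⟩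
    · obtain ⟨y, hxy⟩ := not_isMax_iff.1 hx
      obtain ⟨z, hxz, -⟩ := hxy.exists_covby_le
      obtain ⟨d, hd, hmax⟩ := ih z hxz.lt
      exact ⟨z :: d, hd.cons_cons hxz, by rwa [List.getLast_cons_cons]⟩

end Chains

section Rank

variable [PartialOrder P] [Finite P] {ε μ : P → P → ℤ} {r rε rμ : ℤ} {x y : P} {c : List P}

/-- The rank `ρ_ε(x)`, read off one chosen saturated chain from a minimal element to `x`;
the choice does not matter when `P` is `ε`-graded. -/
noncomputable def labeledRank (ε : P → P → ℤ) (x : P) : ℤ :=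
  chainWeight ε (exists_isSatChainFromMinTo x).choose

theorem IsEGraded.chainWeight_eq_labeledRank (hg : IsEGraded ε r)
    (hc : IsSatChainFromMinTo x c) : chainWeight ε c = labeledRank ε x := by
  obtain ⟨d, hd, hmax⟩ := exists_isChain_covBy_cons_isMax x
  have hc' := (exists_isSatChainFromMinTo x).choose_spec
  have h₁ := hg _ (hc.isMaxChainL_append hd hmax)
  have h₂ := hg _ (hc'.isMaxChainL_append hd hmax)
  rw [chainWeight_append ε hc.2.2] at h₁
  rw [chainWeight_append ε hc'.2.2] at h₂
  rw [labeledRank]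
  omega

theorem IsEGraded.labeledRank_of_isMin (hg : IsEGraded ε r) (hx : IsMin x) :
    labeledRank ε x = 0 :=
  (hg.chainWeight_eq_labeledRank (isSatChainFromMinTo_singleton hx)).symm

theorem IsEGraded.labeledRank_of_covBy (hg : IsEGraded ε r) (hxy : x ⋖ y) :
    labeledRank ε y = labeledRank ε x + ε x y := by
  obtain ⟨c, hc⟩ := exists_isSatChainFromMinTo x
  rw [← hg.chainWeight_eq_labeledRank (hc.append_covBy hxy), chainWeight_append ε hc.2.2,
    hg.chainWeight_eq_labeledRank hc, chainWeight_cons_cons]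
  simp [chainWeight]

theorem IsEGraded.labeledRank_of_isMax (hg : IsEGraded ε r) (hx : IsMax x) :
    labeledRank ε x = r := by
  obtain ⟨c, hc⟩ := exists_isSatChainFromMinTo x
  have hmax : IsMaxChainL (c ++ []) := hc.isMaxChainL_append (List.isChain_singleton x) hx
  rw [← hg.chainWeight_eq_labeledRank hc, ← hg _ hmax, List.append_nil]

theorem two_dvd_labeledRank_sub (hsε : IsSignLabeling ε) (hsμ : IsSignLabeling μ)
    (hgε : IsEGraded ε rε) (hgμ : IsEGraded μ rμ) (x : P) :
    2 ∣ labeledRank ε x - labeledRank μ x := by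
  induction x using WellFoundedLT.induction with
  | _ x ih =>
    by_cases hx : IsMin x
    · simp [hgε.labeledRank_of_isMin hx, hgμ.labeledRank_of_isMin hx]
    · obtain ⟨y, hyx⟩ := not_isMin_iff.1 hx
      obtain ⟨z, -, hzx⟩ := hyx.exists_le_covby
      have := ih z hzx.lt
      rw [hgε.labeledRank_of_covBy hzx, hgμ.labeledRank_of_covBy hzx]
      rcases hsε z x hzx with h | h <;> rcases hsμ z x hzx with h' | h' <;> omega

theorem two_dvd_sub_of_isEGraded [Nonempty P] (hsε : IsSignLabeling ε) (hsμ : IsSignLabeling μ)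
    (hgε : IsEGraded ε rε) (hgμ : IsEGraded μ rμ) : 2 ∣ rε - rμ := by
  obtain ⟨x⟩ := ‹Nonempty P›
  obtain ⟨d, -, hmax⟩ := exists_isChain_covBy_cons_isMax x
  have := two_dvd_labeledRank_sub hsε hsμ hgε hgμ ((x :: d).getLast (List.cons_ne_nil x d))
  rwa [hgε.labeledRank_of_isMax hmax, hgμ.labeledRank_of_isMax hmax] at this

end Rank

section Shift

variable [PartialOrder P] [Finite P] {ε μ : P → P → ℤ} {rε rμ k : ℤ}

theorem exists_shift_of_isEGraded (hsε : IsSignLabeling ε) (hsμ : IsSignLabeling μ)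
    (hgε : IsEGraded ε rε) (hgμ : IsEGraded μ rμ) (hk : rμ - rε = 2 * k) :
    ∃ g : P → ℤ, (∀ x y, x ⋖ y → 2 * (g y - g x) = ε x y - μ x y) ∧
      (∀ x, IsMin x → g x = k) ∧ (∀ x, IsMax x → g x = 0) := by
  refine ⟨fun x => (labeledRank ε x - labeledRank μ x) / 2 + k, fun x y hxy => ?_,
    fun x hx => ?_, fun x hx => ?_⟩ <;> dsimp only
  · have := two_dvd_labeledRank_sub hsε hsμ hgε hgμ x
    have := two_dvd_labeledRank_sub hsε hsμ hgε hgμ y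
    rw [hgε.labeledRank_of_covBy hxy, hgμ.labeledRank_of_covBy hxy] at *
    omega
  · simp [hgε.labeledRank_of_isMin hx, hgμ.labeledRank_of_isMin hx]
  · rw [hgε.labeledRank_of_isMax hx, hgμ.labeledRank_of_isMax hx]
    omega

variable {g σ : P → ℤ} {n : ℤ}

theorem IsPPartition.add_of_covBy (hsε : IsSignLabeling ε) (hsμ : IsSignLabeling μ)
    (hσ : IsPPartition μ σ) (hg : ∀ x y, x ⋖ y → 2 * (g y - g x) = ε x y - μ x y)
    (hmax : ∀ x, IsMax x → g x = 0) : IsPPartition ε (σ + g) := by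
  obtain ⟨hpos, hanti, hstrict⟩ := hσ
  have hcovBy : ∀ x y, x ⋖ y →
      (σ + g) y ≤ (σ + g) x ∧ (ε x y = -1 → (σ + g) y < (σ + g) x) := by
    intro x y hxy
    have := hanti x y hxy.le
    have := hstrict x y hxy
    have := hg x y hxy
    simp only [Pi.add_apply]
    rcases hsε x y hxy with h | h <;> rcases hsμ x y hxy with h' | h' <;> omega
  have hτ : Antitone (σ + g) := by
    let := LocallyFiniteOrder.ofFiniteIcc fun a b : P => (Set.Icc a b).toFinite
    exact (antitone_iff_forall_covBy _).2 fun x y hxy => (hcovBy x y hxy).1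
  refine ⟨fun x => ?_, fun x y hxy => hτ hxy, fun x y hxy => (hcovBy x y hxy).2⟩
  obtain ⟨y, hxy, hy⟩ := exists_maximal_ge_of_wellFoundedGT (fun _ : P => True) x trivial
  calc 1 ≤ σ y := hpos y
    _ = (σ + g) y := by rw [Pi.add_apply, hmax y (maximal_true.1 hy), add_zero]
    _ ≤ (σ + g) x := hτ hxy

theorem isPPartition_add_and_le (hsε : IsSignLabeling ε) (hsμ : IsSignLabeling μ)
    (hg : ∀ x y, x ⋖ y → 2 * (g y - g x) = ε x y - μ x y)
    (hmin : ∀ x, IsMin x → g x = k) (hmax : ∀ x, IsMax x → g x = 0)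
    (hσ : IsPPartition μ σ ∧ ∀ x, σ x ≤ n) :
    IsPPartition ε (σ + g) ∧ ∀ x, (σ + g) x ≤ n + k := by
  have hτ := hσ.1.add_of_covBy hsε hsμ hg hmax
  refine ⟨hτ, fun x => ?_⟩
  obtain ⟨m, hmx, hm⟩ := exists_minimal_le_of_wellFoundedLT (fun _ : P => True) x trivial
  calc (σ + g) x ≤ (σ + g) m := hτ.2.1 m x hmx
    _ = σ m + k := by rw [Pi.add_apply, hmin m (minimal_true.1 hm)]
    _ ≤ n + k := by linarith [hσ.2 m]

theorem omegaCount_eq_of_shift (hsε : IsSignLabeling ε) (hsμ : IsSignLabeling μ)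
    (hg : ∀ x y, x ⋖ y → 2 * (g y - g x) = ε x y - μ x y)
    (hmin : ∀ x, IsMin x → g x = k) (hmax : ∀ x, IsMax x → g x = 0)
    {n m : ℕ} (hnm : (m : ℤ) = n + k) : OmegaCount μ n = OmegaCount ε m := by
  have hg' : ∀ x y, x ⋖ y → 2 * ((-g) y - (-g) x) = μ x y - ε x y := fun x y hxy => by
    simp only [Pi.neg_apply]; linarith [hg x y hxy]
  refine Nat.card_congr <|
    Equiv.subtypeEquiv (Equiv.addRight g) fun σ => ⟨fun h => ?_, fun h => ?_⟩
  · show IsPPartition ε (σ + g) ∧ ∀ x, (σ + g) x ≤ m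
    exact hnm ▸ isPPartition_add_and_le hsε hsμ hg hmin hmax h
  · have hmin' : ∀ x, IsMin x → (-g) x = -k := fun x hx => by rw [Pi.neg_apply, hmin x hx]
    have hmax' : ∀ x, IsMax x → (-g) x = 0 := fun x hx => by rw [Pi.neg_apply, hmax x hx, neg_zero]
    simpa [hnm] using isPPartition_add_and_le hsμ hsε hg' hmin' hmax' h

end Shift

theorem Polynomial.eq_comp_X_add_C_of_eval_natCast {R : Type*} [CommRing R] [IsDomain R]
    [CharZero R] {p q : R[X]} (k : ℤ)
    (h : ∀ n m : ℕ, (m : ℤ) = n + k → p.eval (n : R) = q.eval (m : R)) :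
    p = q.comp (X + C (k : R)) := by
  refine eq_of_infinite_eval_eq p _ <| Set.Infinite.mono ?_ <|
    Set.infinite_range_of_injective (Nat.cast_injective.comp (add_left_injective k.natAbs))
  rintro _ ⟨n, rfl⟩
  rw [Function.comp_apply, Set.mem_ofPred_eq, eval_comp, eval_add, eval_X, eval_C]
  obtain ⟨m, hm⟩ : ∃ m : ℕ, (m : ℤ) = (n + k.natAbs : ℕ) + k := ⟨_, Int.toNat_of_nonneg (by omega)⟩
  generalize n + k.natAbs = N at hm ⊢
  have hmR : (m : R) = N + k := by exact_mod_cast hm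
  rw [h _ _ hm, hmR]

/-- if `P` is both `ε`-graded and `μ`-graded then the order
polynomials satisfy `Ω(P,ε;t - r(ε)/2) = Ω(P,μ;t - r(μ)/2)`, i.e.
`Ω(P,μ;t) = Ω(P,ε;t + (r(μ)-r(ε))/2)`. -/
theorem order_polynomial_shift {P : Type*} [PartialOrder P] [Fintype P] [Nonempty P]
    (ε μ : P → P → ℤ) (hsignε : IsSignLabeling ε) (hsignμ : IsSignLabeling μ)
    (rε rμ : ℤ) (hgrε : IsEGraded ε rε) (hgrμ : IsEGraded μ rμ)
    (Ωε Ωμ : Polynomial ℚ)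
    (hΩε : ∀ n : ℕ, Ωε.eval (n : ℚ) = OmegaCount ε n)
    (hΩμ : ∀ n : ℕ, Ωμ.eval (n : ℚ) = OmegaCount μ n) :
    Ωμ = Ωε.comp (X + C (((rμ : ℚ) - rε) / 2)) := by
  obtain ⟨k, hk⟩ := two_dvd_sub_of_isEGraded hsignμ hsignε hgrμ hgrε
  obtain ⟨g, hg, hmin, hmax⟩ := exists_shift_of_isEGraded hsignε hsignμ hgrε hgrμ hk
  have hshift : ((rμ : ℚ) - rε) / 2 = k := by
    rw [← Int.cast_sub, hk]
    push_cast
    ring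
  rw [hshift]
  refine Polynomial.eq_comp_X_add_C_of_eval_natCast k fun n m hnm => ?_
  rw [hΩμ, hΩε, omegaCount_eq_of_shift hsignε hsignμ hg hmin hmax hnm]
end

section
/- For a labeled poset (P,ε), the map Φ_ε(σ) = σ + δ_ε is a bijection from (P,ε)-partitions to (P,-ε)-partitions if and only if P is dual ε-consistent, i.e., for every covering relation (x,y) ∈ E(P), δ_ε(x) = δ_ε(y) + ε(x,y). -/
open Polynomial

variable {P : Type*}

/-- A saturated chain starting at `x` and ending at a maximal element. -/
def IsSatChainFromToMax [PartialOrder P] (x : P) (c : List P) : Prop :=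
  IsSatChain c ∧ c.head? = some x ∧ (∀ y ∈ c.getLast?, IsMax y)

/-!
Under dual consistency, adding `δ` turns the cover conditions of a `(P,ε)`-partition exactly into
those of a `(P,-ε)`-partition: on a cover labeled `1` the drop of `δ` by `1` supplies the
strictness, on one labeled `-1` its rise by `1` absorbs it. An order-reversing map is positive as
soon as it is positive at the maximal elements, where `δ` vanishes; so `σ ↦ σ + δ` is a bijection
with inverse `τ ↦ τ - δ`. Conversely, for every cover `a ⋖ b` and every labeling there is a
partition dropping along `a ⋖ b` by the least amount the labeling allows. Pushing such a
`(P,ε)`-partition forward gives `δ(b) + ε(a,b) ≤ δ(a)`, and pulling such a `(P,-ε)`-partition back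
gives the reverse inequality.
-/

open Finset

section PPartition

variable [PartialOrder P]

theorem IsSignLabeling.neg {ε : P → P → ℤ} (hε : IsSignLabeling ε) :
    IsSignLabeling fun x y => -ε x y := fun x y h => by
  rcases hε x y h with h | h <;> simp [h]

theorem isPPartition_iff_forall_covBy [Finite P] {ε : P → P → ℤ} {σ : P → ℤ} :
    IsPPartition ε σ ↔ (∀ x, IsMax x → 1 ≤ σ x) ∧
      ∀ x y, x ⋖ y → σ y ≤ σ x ∧ (ε x y = -1 → σ y < σ x) := by
  refine ⟨fun ⟨hpos, hanti, hstrict⟩ => ⟨fun x _ => hpos x,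
    fun x y h => ⟨hanti x y h.le, hstrict x y h⟩⟩, fun ⟨hmax, hcov⟩ => ?_⟩
  let _ : LocallyFiniteOrder P := .ofFiniteIcc fun _ _ => Set.toFinite _
  have hanti : Antitone σ := (antitone_iff_forall_covBy σ).2 fun x y h => (hcov x y h).1
  refine ⟨fun x => ?_, fun x y h => hanti h, fun x y h => (hcov x y h).2⟩
  obtain ⟨m, hxm, hm⟩ := Finite.exists_le_maximal (p := fun _ : P => True) (a := x) trivial
  exact (hmax m fun _ hy => hm.2 trivial hy).trans (hanti hxm)

theorem chainWeight_eq_zero_of_head_isMax (ε : P → P → ℤ) {c : List P} {m : P}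
    (hc : c.IsChain (· ⋖ ·)) (hhead : c.head? = some m) (hm : IsMax m) : chainWeight ε c = 0 := by
  match c, hc, hhead with
  | [_], _, _ => simp [chainWeight]
  | _ :: _ :: _, hc, hhead =>
    obtain rfl : _ = m := by simpa using hhead
    exact absurd (List.isChain_cons_cons.1 hc).1.lt hm.not_lt

theorem eq_zero_of_isGreatest_chainWeight {ε : P → P → ℤ} {m : P} {d : ℤ}
    (hd : IsGreatest {w | ∃ c, IsSatChainFromToMax m c ∧ chainWeight ε c = w} d)
    (hm : IsMax m) : d = 0 := by
  obtain ⟨c, ⟨⟨-, hc⟩, hhead, -⟩, rfl⟩ := hd.1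
  exact chainWeight_eq_zero_of_head_isMax ε hc hhead hm

theorem isPPartition_neg_add_iff [Finite P] {ε : P → P → ℤ} (hε : IsSignLabeling ε) {δ : P → ℤ}
    (hcons : ∀ x y, x ⋖ y → δ x = δ y + ε x y) (hmax : ∀ x, IsMax x → δ x = 0) (σ : P → ℤ) :
    IsPPartition (fun x y => -ε x y) (fun x => σ x + δ x) ↔ IsPPartition ε σ := by
  simp only [isPPartition_iff_forall_covBy]
  refine and_congr (forall₂_congr fun x hx => by rw [hmax x hx, add_zero])
    (forall₃_congr fun x y hxy => ?_)
  have := hcons x y hxy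
  rcases hε x y hxy with h | h <;> rw [h] at this ⊢ <;> omega

theorem card_filter_le_lt_of_lt [DecidableLE P] {s : Finset P} {z v : P} (hzv : z < v)
    (hz : z ∈ s) : #{w ∈ s | v ≤ w} < #{w ∈ s | z ≤ w} := by
  refine card_lt_card (ssubset_iff_of_subset ?_ |>.2 ⟨z, ?_, ?_⟩)
  · exact monotone_filter_right s fun _ _ => hzv.le.trans
  · simp [hz]
  · simp [hzv.not_ge]

/-- Elements below `b` are lifted above all others and ranked by the number of elements of
`[·, b]` above them; `a` is left out of that count unless strictness is forced at `a ⋖ b`. -/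
theorem exists_isPPartition_tight_at_covBy [Fintype P] (η : P → P → ℤ) {a b : P} (hab : a ⋖ b) :
    ∃ σ, IsPPartition η σ ∧ σ a ≤ σ b + if η a b = -1 then 1 else 0 := by
  classical
  set C : Finset P := {w | w ≤ b ∧ (w ≠ a ∨ η a b = -1)}
  set σ : P → ℤ := fun z =>
    if z ≤ b then Fintype.card P + #{w ∈ C | z ≤ w} else #{w | z ≤ w}
  have hC {w : P} (hw : w ∈ C) (haw : a ≤ w) : w = a ∧ η a b = -1 ∨ b ≤ w := by
    simp only [C, mem_filter, mem_univ, true_and] at hw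
    rcases hab.eq_or_eq haw hw.1 with rfl | rfl
    · exact .inl ⟨rfl, hw.2.resolve_left (not_not.2 rfl)⟩
    · exact .inr le_rfl
  refine ⟨σ, isPPartition_iff_forall_covBy.2 ⟨fun x _ => ?_, fun z v hzv => ?_⟩, ?_⟩
  · have hpos : 0 < #{w | x ≤ w} := card_pos.2 ⟨x, by simp⟩
    have : 0 < Fintype.card P := Fintype.card_pos_iff.2 ⟨x⟩
    simp only [σ]
    split_ifs <;> omega
  · have hcard_lt {s : Finset P} (hz : z ∈ s) := card_filter_le_lt_of_lt hzv.lt hz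
    by_cases hv : v ≤ b
    · simp only [σ, if_pos hv, if_pos (hzv.le.trans hv)]
      by_cases hz : z ∈ C
      · have := hcard_lt hz
        omega
      · obtain ⟨rfl, hη⟩ : z = a ∧ η a b ≠ -1 := by
          simp only [C, mem_filter, mem_univ, true_and, not_and_or, not_or, not_not] at hz
          exact hz.resolve_left (not_not.2 (hzv.le.trans hv))
        obtain rfl : v = b := (hab.eq_or_eq hzv.le hv).resolve_left hzv.ne'
        have := card_le_card (monotone_filter_right C (p := (v ≤ ·)) (q := (z ≤ ·))
          fun _ _ => hzv.le.trans)
        exact ⟨by omega, fun h => absurd h hη⟩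
    · have := hcard_lt (mem_univ z)
      have : #{w | z ≤ w} ≤ Fintype.card P := card_le_univ _
      simp only [σ, if_neg hv]
      split_ifs <;> omega
  · have hsub {w : P} (hw : w ∈ {w ∈ C | a ≤ w}) : w = a ∧ η a b = -1 ∨ w ∈ {w ∈ C | b ≤ w} := by
      rw [mem_filter] at hw ⊢
      exact (hC hw.1 hw.2).imp_right fun hbw => ⟨hw.1, hbw⟩
    simp only [σ, if_pos hab.le, if_pos le_rfl]
    split_ifs with h
    · have := card_le_card fun w hw => mem_insert.2 ((hsub hw).imp_left And.left)
      have := card_insert_le a {w ∈ C | b ≤ w}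
      omega
    · have := card_le_card fun w hw => (hsub hw).resolve_left fun h' => h h'.2
      omega

theorem add_le_of_mapsTo_add [Fintype P] {η : P → P → ℤ} (hη : IsSignLabeling η) {δ : P → ℤ}
    (h : Set.MapsTo (fun σ x => σ x + δ x) {σ | IsPPartition η σ}
      {τ | IsPPartition (fun x y => -η x y) τ}) {a b : P} (hab : a ⋖ b) :
    δ b + η a b ≤ δ a := by
  obtain ⟨σ, hσ, hσab⟩ := exists_isPPartition_tight_at_covBy η hab
  obtain ⟨-, hle, hlt⟩ : IsPPartition (fun x y => -η x y) (fun x => σ x + δ x) := h hσ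
  have hmono := hle a b hab.le
  have hstrict := hlt a b hab
  rcases hη a b hab with he | he <;> norm_num [he] at hσab hmono hstrict ⊢ <;> omega

theorem bijOn_add_right_of_forall_mem_iff {α G : Type*} [AddGroup G] {s t : Set (α → G)}
    {δ : α → G}
    (h : ∀ σ, (fun x => σ x + δ x) ∈ t ↔ σ ∈ s) : Set.BijOn (fun σ x => σ x + δ x) s t := by
  have := (Equiv.addRight δ).bijective.bijOn_preimage (t := t)
  rwa [show ⇑(Equiv.addRight δ) ⁻¹' t = s from Set.ext h] at this

end PPartition

theorem Phi_bijection_iff_dual_consistent_general {P : Type*} [PartialOrder P] [Fintype P]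
    (ε : P → P → ℤ) (hsign : IsSignLabeling ε)
    (δ : P → ℤ)
    (hδ : ∀ x : P, IsGreatest {w : ℤ | ∃ c : List P, IsSatChainFromToMax x c ∧
      chainWeight ε c = w} (δ x)) :
    Set.BijOn (fun (σ : P → ℤ) => fun x => σ x + δ x)
      {σ : P → ℤ | IsPPartition ε σ}
      {σ : P → ℤ | IsPPartition (fun x y => -ε x y) σ} ↔
    ∀ x y : P, x ⋖ y → δ x = δ y + ε x y := by
  constructor
  · intro hbij a b hab
    have hinv : Set.MapsTo (fun τ x => τ x + -δ x) {τ | IsPPartition (fun x y => -ε x y) τ}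
        {σ | IsPPartition (fun x y => -(-ε x y)) σ} := by
      rintro _ hτ
      obtain ⟨σ, hσ, rfl⟩ := hbij.surjOn hτ
      simpa using hσ
    have := add_le_of_mapsTo_add hsign hbij.mapsTo hab
    have := add_le_of_mapsTo_add hsign.neg hinv hab
    omega
  · intro hcons
    have hmax (m : P) (hm : IsMax m) : δ m = 0 := eq_zero_of_isGreatest_chainWeight (hδ m) hm
    exact bijOn_add_right_of_forall_mem_iff (isPPartition_neg_add_iff hsign hcons hmax)

/-- with `δ(x)` the maximum ε-weight of a saturated chain from
`x` to a maximal element, the map `Φ_ε(σ) = σ + δ` is a bijection from the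
set of `(P,ε)`-partitions onto the set of `(P,-ε)`-partitions if and only if
`P` is dual `ε`-consistent, i.e. `δ(x) = δ(y) + ε(x,y)` for every covering
relation `x ⋖ y`. -/
theorem Phi_bijection_iff_dual_consistent {P : Type*} [PartialOrder P] [Fintype P] [Nonempty P]
    (ε : P → P → ℤ) (hsign : IsSignLabeling ε)
    (δ : P → ℤ)
    (hδ : ∀ x : P, IsGreatest {w : ℤ | ∃ c : List P, IsSatChainFromToMax x c ∧
      chainWeight ε c = w} (δ x)) :
    Set.BijOn (fun (σ : P → ℤ) => fun x => σ x + δ x)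
      {σ : P → ℤ | IsPPartition ε σ}
      {σ : P → ℤ | IsPPartition (fun x y => -ε x y) σ} ↔
    ∀ x y : P, x ⋖ y → δ x = δ y + ε x y :=
  Phi_bijection_iff_dual_consistent_general ε hsign δ hδ
end
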